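/- Let D = {x^α : α ∈ {0,1}^ℕ} ⊂ Σ_2 be the set of points x^α = M^{α_1}_{a_1} M^0_{a_2} M^{α_2}_{a_3} M^0_{a_4} ... . Then for any triple (x^α, x^β, x^γ) ∈ D³ of points with no two equal, liminf_{k→∞} min{ d(σ^k(x^α),σ^k(x^β)), d(σ^k(x^α),σ^k(x^γ)), d(σ^k(x^β),σ^k(x^γ)) } = 0; in particular the triple fails condition (2) of being 3-scrambled (limsup of the minimum pairwise distance is positive fails after noting that at each position of an odd-indexed block, at least two of the three points carry identical blocks). -/

import Mathlib

open Filter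

/-- Metric on Σ₂ = {0,1}^ℕ : d(u,v) = Σ_{i≥1} δ(u_i,v_i)/2^i (coordinates 0-indexed). -/
noncomputable def dist2 (u v : ℕ → Bool) : ℝ :=
  ∑' i : ℕ, if u i = v i then 0 else (1/2)^(i+1)

/-- The shift map. -/
def shift (u : ℕ → Bool) : ℕ → Bool := fun n => u (n + 1)

/-- Binary complement of a word. -/
def wordCompl (B : List Bool) : List Bool := B.map (fun b => !b)

/-- Morse blocks: M_0 = 0, M_{i+1} = M_i followed by its complement. -/
def morseBlock : ℕ → List Bool
  | 0 => [false]
  | i + 1 => morseBlock i ++ wordCompl (morseBlock i)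

/-- The Morse sequence, the limit of the Morse blocks. -/
def morse : ℕ → Bool := fun n => (morseBlock (n + 1)).getD n false

open Classical in
/-- Infinite concatenation of a sequence of (nonempty) blocks. -/
noncomputable def concatSeq (B : ℕ → List Bool) (k : ℕ) : Bool :=
  if h : ∃ n, ∑ i ∈ Finset.range n, (B i).length ≤ k ∧
      k < ∑ i ∈ Finset.range (n + 1), (B i).length then
    (B h.choose).getD (k - ∑ i ∈ Finset.range h.choose, (B i).length) false
  else false

open Classical in
/-- Lower distributional function. -/
noncomputable def Phi (x y : ℕ → Bool) (δ : ℝ) : ℝ :=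
  liminf (fun m : ℕ =>
    (((Finset.Ioo 0 m).filter (fun k => dist2 (shift^[k] x) (shift^[k] y) < δ)).card : ℝ) / m)
    atTop

open Classical in
/-- Upper distributional function. -/
noncomputable def PhiStar (x y : ℕ → Bool) (ε : ℝ) : ℝ :=
  limsup (fun m : ℕ =>
    (((Finset.Ioo 0 m).filter (fun k => dist2 (shift^[k] x) (shift^[k] y) < ε)).card : ℝ) / m)
    atTop

/-- A Li-Yorke scrambled triple. -/
noncomputable def ScrTriple (x y z : ℕ → Bool) : Prop :=
  x ≠ y ∧ x ≠ z ∧ y ≠ z ∧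
  liminf (fun k : ℕ => max (max (dist2 (shift^[k] x) (shift^[k] y))
      (dist2 (shift^[k] x) (shift^[k] z))) (dist2 (shift^[k] y) (shift^[k] z))) atTop = 0 ∧
  0 < limsup (fun k : ℕ => min (min (dist2 (shift^[k] x) (shift^[k] y))
      (dist2 (shift^[k] x) (shift^[k] z))) (dist2 (shift^[k] y) (shift^[k] z))) atTop

/-- Concatenation of Morse blocks M_{a j}, complemented where `e j = true`. -/
noncomputable def blockPt (a : ℕ → ℕ) (e : ℕ → Bool) : ℕ → Bool :=
  concatSeq (fun j => if e j then wordCompl (morseBlock (a j)) else morseBlock (a j))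

/-- A point occurring as in Theorem 2: odd-position blocks fixed, even-position blocks chosen by α. -/
noncomputable def xpt (a : ℕ → ℕ) (α : ℕ → Bool) : ℕ → Bool :=
  blockPt a (fun j => if j % 2 = 0 then α (j / 2) else false)

/-- Cantor set predicate. -/
def IsCantorSet (C : Set (ℕ → Bool)) : Prop :=
  C.Nonempty ∧ IsCompact C ∧ Perfect C ∧ IsTotallyDisconnected C

/-- The Morse minimal set: orbit closure of the Morse sequence. -/
def morseMinimal : Set (ℕ → Bool) := closure {y | ∃ k : ℕ, y = shift^[k] morse}

/-
`xpt a α` concatenates the Morse blocks `M_{a j}`, complemented only at even positions `j = 2m`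
with `α m = true`, so at odd positions all three points carry the same block. If `k` lies in
block `j`, the first `2 ^ a (j + 1)` coordinates of a shifted orbit are read off blocks `j` and
`j + 1`. One of them is odd-indexed, hence common to all three points, and on the other two of the
three points agree by pigeonhole on `Bool`. So at time `k` some pair is within
`(1/2) ^ 2 ^ a (j + 1)`, which tends to `0` as `a` is strictly increasing.
-/

lemma shift_iterate_apply (u : ℕ → Bool) (k m : ℕ) : shift^[k] u m = u (m + k) := by
  induction k generalizing u with
  | zero => rfl
  | succ k ih => rw [Function.iterate_succ_apply, ih, shift, Nat.add_assoc]

lemma dist2_nonneg (u v : ℕ → Bool) : 0 ≤ dist2 u v :=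
  tsum_nonneg fun i => by split_ifs <;> positivity

lemma dist2_le_of_eqOn {u v : ℕ → Bool} {N : ℕ} (h : ∀ i < N, u i = v i) :
    dist2 u v ≤ (1 / 2) ^ N := by
  set f : ℕ → ℝ := fun i => if u i = v i then 0 else (1 / 2) ^ (i + 1)
  have hf_le : ∀ i, f i ≤ (1 / 2) ^ (i + 1) := fun i => by
    simp only [f]; split_ifs <;> simp
  have hf : Summable f :=
    .of_nonneg_of_le (fun i => by simp only [f]; split_ifs <;> positivity) hf_le
      ((summable_nat_add_iff 1).2 summable_geometric_two)
  calc dist2 u v = ∑' i, f (i + N) := by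
        change ∑' i, f i = _
        rw [← hf.sum_add_tsum_nat_add N, Finset.sum_eq_zero, zero_add]
        intro i hi
        exact if_pos (h i (Finset.mem_range.1 hi))
    _ ≤ ∑' i : ℕ, (1 / 2) ^ N / 2 * (1 / 2) ^ i :=
        Summable.tsum_le_tsum (fun i => (hf_le _).trans_eq (by ring))
          ((summable_nat_add_iff N).2 hf) (summable_geometric_two.mul_left _)
    _ = (1 / 2) ^ N := by rw [tsum_mul_left, tsum_geometric_two]; ring

lemma Nat.exists_le_and_lt_succ {f : ℕ → ℕ} {k : ℕ} (h0 : f 0 ≤ k) (hk : ∃ m, k < f m) :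
    ∃ n, f n ≤ k ∧ k < f (n + 1) := by
  classical
  have hpos : Nat.find hk ≠ 0 := fun h => (Nat.find_spec hk).not_ge (h ▸ h0)
  refine ⟨Nat.find hk - 1, not_lt.1 (Nat.find_min hk (by omega)), ?_⟩
  rw [Nat.sub_add_cancel (Nat.pos_of_ne_zero hpos)]
  exact Nat.find_spec hk

lemma concatSeq_apply {B : ℕ → List Bool} {n k : ℕ}
    (hn : ∑ i ∈ Finset.range n, (B i).length ≤ k)
    (hn' : k < ∑ i ∈ Finset.range (n + 1), (B i).length) :
    concatSeq B k = (B n).getD (k - ∑ i ∈ Finset.range n, (B i).length) false := by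
  have hex : ∃ m, ∑ i ∈ Finset.range m, (B i).length ≤ k ∧
      k < ∑ i ∈ Finset.range (m + 1), (B i).length := ⟨n, hn, hn'⟩
  have hmono : Monotone fun m => ∑ i ∈ Finset.range m, (B i).length :=
    fun p q hpq => Finset.sum_le_sum_of_subset (Finset.range_subset_range.2 hpq)
  obtain ⟨hm, hm'⟩ := hex.choose_spec
  have hchoose : hex.choose = n := by
    have := hmono.reflect_lt (hm.trans_lt hn')
    have := hmono.reflect_lt (hn.trans_lt hm')
    omega
  rw [concatSeq, dif_pos hex, hchoose]

lemma morseBlock_length (i : ℕ) : (morseBlock i).length = 2 ^ i := by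
  induction i with
  | zero => rfl
  | succ i ih => simp [morseBlock, wordCompl, ih, pow_succ, mul_two]

def blockStart (a : ℕ → ℕ) (n : ℕ) : ℕ := ∑ i ∈ Finset.range n, 2 ^ a i

lemma blockStart_succ (a : ℕ → ℕ) (n : ℕ) : blockStart a (n + 1) = blockStart a n + 2 ^ a n :=
  Finset.sum_range_succ _ _

lemma blockStart_mono (a : ℕ → ℕ) : Monotone (blockStart a) := fun _ _ h =>
  Finset.sum_le_sum_of_subset (Finset.range_subset_range.2 h)

lemma exists_blockStart_le_lt (a : ℕ → ℕ) (k : ℕ) :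
    ∃ n, blockStart a n ≤ k ∧ k < blockStart a (n + 1) := by
  refine Nat.exists_le_and_lt_succ (Nat.zero_le k) ⟨k + 1, ?_⟩
  calc k < k + 1 := k.lt_succ_self
    _ = ∑ _i ∈ Finset.range (k + 1), 1 := by simp
    _ ≤ blockStart a (k + 1) := Finset.sum_le_sum fun i _ => Nat.one_le_two_pow

lemma blockPt_apply (a : ℕ → ℕ) (e : ℕ → Bool) {n k : ℕ} (hn : blockStart a n ≤ k)
    (hn' : k < blockStart a (n + 1)) :
    blockPt a e k = (if e n then wordCompl (morseBlock (a n)) else morseBlock (a n)).getD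
      (k - blockStart a n) false := by
  have hlen : ∀ m, ∑ i ∈ Finset.range m,
      (if e i then wordCompl (morseBlock (a i)) else morseBlock (a i)).length = blockStart a m :=
    fun m => Finset.sum_congr rfl fun i _ => by
      split_ifs <;> simp [wordCompl, morseBlock_length]
  rw [blockPt, concatSeq_apply (by rwa [hlen]) (by rwa [hlen]), hlen]

lemma blockPt_eq_of_mem_block (a : ℕ → ℕ) {e e' : ℕ → Bool} {n k : ℕ} (he : e n = e' n)
    (hn : blockStart a n ≤ k) (hn' : k < blockStart a (n + 1)) :
    blockPt a e k = blockPt a e' k := by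
  rw [blockPt_apply a e hn hn', blockPt_apply a e' hn hn', he]

lemma dist2_shift_blockPt_le (a : ℕ → ℕ) {e e' : ℕ → Bool} {j k : ℕ} (hj : e j = e' j)
    (hj' : e (j + 1) = e' (j + 1)) (hk : blockStart a j ≤ k) (hk' : k < blockStart a (j + 1)) :
    dist2 (shift^[k] (blockPt a e)) (shift^[k] (blockPt a e')) ≤ (1 / 2) ^ 2 ^ a (j + 1) := by
  refine dist2_le_of_eqOn fun i hi => ?_
  rw [shift_iterate_apply, shift_iterate_apply]
  rcases lt_or_ge (i + k) (blockStart a (j + 1)) with h | h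
  · exact blockPt_eq_of_mem_block a hj (by omega) h
  · have := blockStart_succ a (j + 1)
    exact blockPt_eq_of_mem_block a hj' h (by omega)

def xptSigns (α : ℕ → Bool) (j : ℕ) : Bool := if j % 2 = 0 then α (j / 2) else false

lemma xpt_eq_blockPt (a : ℕ → ℕ) (α : ℕ → Bool) : xpt a α = blockPt a (xptSigns α) := rfl

lemma xptSigns_pigeonhole (α β γ : ℕ → Bool) (j : ℕ) :
    (xptSigns α j = xptSigns β j ∧ xptSigns α (j + 1) = xptSigns β (j + 1)) ∨
    (xptSigns α j = xptSigns γ j ∧ xptSigns α (j + 1) = xptSigns γ (j + 1)) ∨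
    (xptSigns β j = xptSigns γ j ∧ xptSigns β (j + 1) = xptSigns γ (j + 1)) := by
  have pigeonhole : ∀ x y z : Bool, x = y ∨ x = z ∨ y = z := by decide
  rcases Nat.mod_two_eq_zero_or_one j with hj | hj
  · have hj' : (j + 1) % 2 = 1 := by omega
    simpa [xptSigns, hj, hj'] using pigeonhole (α (j / 2)) (β (j / 2)) (γ (j / 2))
  · have hj' : (j + 1) % 2 = 0 := by omega
    simpa [xptSigns, hj, hj'] using
      pigeonhole (α ((j + 1) / 2)) (β ((j + 1) / 2)) (γ ((j + 1) / 2))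

noncomputable def minOrbitDist (x y z : ℕ → Bool) (k : ℕ) : ℝ :=
  min (min (dist2 (shift^[k] x) (shift^[k] y)) (dist2 (shift^[k] x) (shift^[k] z)))
    (dist2 (shift^[k] y) (shift^[k] z))

lemma minOrbitDist_nonneg (x y z : ℕ → Bool) (k : ℕ) : 0 ≤ minOrbitDist x y z k :=
  le_min (le_min (dist2_nonneg _ _) (dist2_nonneg _ _)) (dist2_nonneg _ _)

lemma minOrbitDist_xpt_le (a : ℕ → ℕ) (α β γ : ℕ → Bool) {j k : ℕ} (hk : blockStart a j ≤ k)
    (hk' : k < blockStart a (j + 1)) :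
    minOrbitDist (xpt a α) (xpt a β) (xpt a γ) k ≤ (1 / 2) ^ 2 ^ a (j + 1) := by
  simp only [minOrbitDist, xpt_eq_blockPt]
  rcases xptSigns_pigeonhole α β γ j with ⟨h, h'⟩ | ⟨h, h'⟩ | ⟨h, h'⟩
  · exact (min_le_left _ _).trans <| (min_le_left _ _).trans <|
      dist2_shift_blockPt_le a h h' hk hk'
  · exact (min_le_left _ _).trans <| (min_le_right _ _).trans <|
      dist2_shift_blockPt_le a h h' hk hk'
  · exact (min_le_right _ _).trans <| dist2_shift_blockPt_le a h h' hk hk'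

lemma tendsto_minOrbitDist_xpt {a : ℕ → ℕ} (ha : StrictMono a) (α β γ : ℕ → Bool) :
    Tendsto (minOrbitDist (xpt a α) (xpt a β) (xpt a γ)) atTop (nhds 0) := by
  refine tendsto_order.2 ⟨fun b hb => .of_forall fun k => hb.trans_le
    (minOrbitDist_nonneg _ _ _ k), fun ε hε => ?_⟩
  obtain ⟨N, hN⟩ := exists_pow_lt_of_lt_one hε (by norm_num : (1 / 2 : ℝ) < 1)
  refine eventually_atTop.2 ⟨blockStart a N, fun k hk => ?_⟩
  obtain ⟨j, hj, hj'⟩ := exists_blockStart_le_lt a k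
  have hNj : N ≤ j := by
    by_contra! h
    have := blockStart_mono a (show j + 1 ≤ N from h)
    omega
  have hN_le : N ≤ 2 ^ a (j + 1) :=
    calc N ≤ j + 1 := by omega
      _ ≤ a (j + 1) := ha.le_apply
      _ ≤ 2 ^ a (j + 1) := Nat.lt_two_pow_self.le
  calc minOrbitDist (xpt a α) (xpt a β) (xpt a γ) k ≤ (1 / 2) ^ 2 ^ a (j + 1) :=
        minOrbitDist_xpt_le a α β γ hj hj'
    _ ≤ (1 / 2) ^ N := pow_le_pow_of_le_one (by norm_num) (by norm_num) hN_le
    _ < ε := hN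

theorem stmt12_general (a : ℕ → ℕ) (α β γ : ℕ → Bool) (hmono : StrictMono a) :
    liminf (fun k : ℕ => min (min (dist2 (shift^[k] (xpt a α)) (shift^[k] (xpt a β)))
        (dist2 (shift^[k] (xpt a α)) (shift^[k] (xpt a γ))))
        (dist2 (shift^[k] (xpt a β)) (shift^[k] (xpt a γ)))) atTop = 0 ∧
    limsup (fun k : ℕ => min (min (dist2 (shift^[k] (xpt a α)) (shift^[k] (xpt a β)))
        (dist2 (shift^[k] (xpt a α)) (shift^[k] (xpt a γ))))
        (dist2 (shift^[k] (xpt a β)) (shift^[k] (xpt a γ)))) atTop = 0 :=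
  have h := tendsto_minOrbitDist_xpt hmono α β γ
  ⟨h.liminf_eq, h.limsup_eq⟩

theorem stmt12 (a : ℕ → ℕ) (α β γ : ℕ → Bool) (hmono : StrictMono a) (hpos : ∀ n, 0 < a n)
    (hratio : Tendsto (fun n => (a n : ℝ) / (a (n + 1) : ℝ)) atTop (nhds 0))
    (h1 : xpt a α ≠ xpt a β) (h2 : xpt a α ≠ xpt a γ) (h3 : xpt a β ≠ xpt a γ) :
    liminf (fun k : ℕ => min (min (dist2 (shift^[k] (xpt a α)) (shift^[k] (xpt a β)))
        (dist2 (shift^[k] (xpt a α)) (shift^[k] (xpt a γ))))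
        (dist2 (shift^[k] (xpt a β)) (shift^[k] (xpt a γ)))) atTop = 0 ∧
    limsup (fun k : ℕ => min (min (dist2 (shift^[k] (xpt a α)) (shift^[k] (xpt a β)))
        (dist2 (shift^[k] (xpt a α)) (shift^[k] (xpt a γ))))
        (dist2 (shift^[k] (xpt a β)) (shift^[k] (xpt a γ)))) atTop = 0 :=
  stmt12_general a α β γ hmono
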